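/- Let N be an Orlicz function with N(0)=0, N(1)=1, and suppose there is a constant C₁ ≥ 1 such that N(st) ≤ C₁ N(s)N(t) for all 0 < s, t ≤ 1. Then the unit vector basis of ℓ_N is upper semi-homogeneous with constant C₁: for every n, every a_1,...,a_n ∈ ℝ, and every family u_1,...,u_n of pairwise disjoint norm-one elements of ℓ_N, ‖∑_{k=1}^n a_k u_k‖_{ℓ_N} ≤ C₁ ‖∑_{k=1}^n a_k e_k‖_{ℓ_N}. -/

import Mathlib

/-- The Orlicz sequence space norm `‖a‖_{ℓ_N} = inf{u > 0 : ∑_k N(|a_k|/u) ≤ 1}`. -/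
noncomputable def orliczNorm (N : ℝ → ℝ) (a : ℕ → ℝ) : ℝ :=
  sInf {u : ℝ | 0 < u ∧ ∑' k : ℕ, N (|a k| / u) ≤ 1}

section Aux

variable {N : ℝ → ℝ}

lemma orliczAux_nonneg (hN0 : N 0 = 0) (hmono : MonotoneOn N (Set.Ici 0))
    {x : ℝ} (hx : 0 ≤ x) : 0 ≤ N x := by
  have h := hmono (Set.mem_Ici.mpr le_rfl) (Set.mem_Ici.mpr hx) hx
  linarith

/-- Convexity scaling: `N (c*x) ≤ c * N x` for `0 ≤ c ≤ 1`, `0 ≤ x`. -/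
lemma orliczAux_scale (hN0 : N 0 = 0) (hconv : ConvexOn ℝ (Set.Ici 0) N)
    {c x : ℝ} (hc0 : 0 ≤ c) (hc1 : c ≤ 1) (hx : 0 ≤ x) : N (c * x) ≤ c * N x := by
  have h := hconv.2 (Set.mem_Ici.mpr hx) (Set.mem_Ici.mpr (le_refl (0:ℝ)))
    hc0 (by linarith : (0:ℝ) ≤ 1 - c) (by ring)
  simpa [hN0, smul_eq_mul] using h

/-- If `N x ≤ 1` and `x ≥ 0` then `x ≤ 1`. -/
lemma orliczAux_le_one (hN0 : N 0 = 0) (hN1 : N 1 = 1)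
    (hconv : ConvexOn ℝ (Set.Ici 0) N) {x : ℝ} (hx : 0 ≤ x) (h : N x ≤ 1) : x ≤ 1 := by
  by_contra h1
  push_neg at h1
  have hx0 : (0:ℝ) < x := by linarith
  have h2 := orliczAux_scale hN0 hconv (c := 1/x) (x := x)
    (by positivity) (by rw [div_le_one hx0]; linarith) hx
  rw [one_div, inv_mul_cancel₀ (ne_of_gt hx0), hN1] at h2
  have h3 : x ≤ N x := by
    have h4 := mul_le_mul_of_nonneg_left h2 hx0.le
    rw [mul_one, ← mul_assoc, mul_inv_cancel₀ (ne_of_gt hx0), one_mul] at h4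
    exact h4
  linarith

/-- Key extraction from `orliczNorm N x = 1`: for every `w > 1` the series at `w`
is genuinely summable with sum at most `1`, and every coordinate is at most `w`. -/
lemma orliczAux_norm_one (hN0 : N 0 = 0) (hN1 : N 1 = 1)
    (hmono : MonotoneOn N (Set.Ici 0)) (hconv : ConvexOn ℝ (Set.Ici 0) N)
    (x : ℕ → ℝ) (hx : orliczNorm N x = 1) {w : ℝ} (hw : 1 < w) :
    Summable (fun m => N (|x m| / w)) ∧ (∑' m, N (|x m| / w)) ≤ 1 ∧ ∀ m, |x m| ≤ w := by
  set S : Set ℝ := {t : ℝ | 0 < t ∧ ∑' m : ℕ, N (|x m| / t) ≤ 1} with hSdef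
  have hS : sInf S = 1 := hx
  have hbdd : BddBelow S := ⟨0, fun t ht => ht.1.le⟩
  have hSne : S.Nonempty := by
    by_contra h
    rw [Set.not_nonempty_iff_eq_empty] at h
    rw [h, Real.sInf_empty] at hS
    norm_num at hS
  -- every positive scale gives a summable series
  have hsummable : ∀ t : ℝ, 0 < t → Summable (fun m => N (|x m| / t)) := by
    by_contra hcon
    push_neg at hcon
    obtain ⟨t₀, ht₀, hns⟩ := hcon
    have hsub : ∀ t : ℝ, 0 < t → t ≤ t₀ → t ∈ S := by
      intro t h1 h2
      refine ⟨h1, ?_⟩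
      have hnsum : ¬ Summable (fun m => N (|x m| / t)) := by
        intro hs
        refine hns (Summable.of_nonneg_of_le ?_ ?_ hs)
        · intro m; exact orliczAux_nonneg hN0 hmono (by positivity)
        · intro m
          refine hmono (Set.mem_Ici.mpr (by positivity)) (Set.mem_Ici.mpr (by positivity)) ?_
          gcongr
      rw [tsum_eq_zero_of_not_summable hnsum]
      norm_num
    have hle : sInf S ≤ min t₀ 1 / 2 := by
      refine csInf_le hbdd (hsub _ ?_ ?_)
      · have : (0:ℝ) < min t₀ 1 := lt_min ht₀ one_pos
        positivity
      · calc min t₀ 1 / 2 ≤ min t₀ 1 := by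
              have : (0:ℝ) ≤ min t₀ 1 := le_min ht₀.le zero_le_one
              linarith
          _ ≤ t₀ := min_le_left _ _
    rw [hS] at hle
    have : min t₀ 1 ≤ 1 := min_le_right _ _
    linarith
  obtain ⟨t, htS, htw⟩ := exists_lt_of_csInf_lt hSne (by rw [hS]; exact hw)
  have ht0 : 0 < t := htS.1
  have hpw : ∀ m, N (|x m| / w) ≤ N (|x m| / t) := by
    intro m
    refine hmono (Set.mem_Ici.mpr (by positivity)) (Set.mem_Ici.mpr (by positivity)) ?_
    gcongr
  have hst : Summable (fun m => N (|x m| / t)) := hsummable t ht0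
  have hsw : Summable (fun m => N (|x m| / w)) :=
    Summable.of_nonneg_of_le (fun m => orliczAux_nonneg hN0 hmono (by positivity)) hpw hst
  have htsum : (∑' m, N (|x m| / w)) ≤ 1 :=
    le_trans (Summable.tsum_le_tsum hpw hsw hst) htS.2
  refine ⟨hsw, htsum, fun m => ?_⟩
  have hterm : N (|x m| / w) ≤ 1 := by
    refine le_trans ?_ htsum
    exact Summable.le_tsum hsw m (fun j _ => orliczAux_nonneg hN0 hmono (by positivity))
  have := orliczAux_le_one hN0 hN1 hconv (x := |x m| / w) (by positivity) hterm
  rw [div_le_one (by linarith : (0:ℝ) < w)] at this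
  exact this

end Aux

/-- If `N(st) ≤ C₁ N(s)N(t)` for `0 < s, t ≤ 1`, then the unit vector basis of `ℓ_N`
is upper semi-homogeneous with constant `C₁`. -/
theorem orlicz_upper_semi_homogeneous
    (N : ℝ → ℝ)
    (hN0 : N 0 = 0) (hN1 : N 1 = 1)
    (hmono : MonotoneOn N (Set.Ici 0))
    (hconv : ConvexOn ℝ (Set.Ici 0) N)
    (hcont : Continuous N)
    (htop : Filter.Tendsto N Filter.atTop Filter.atTop)
    (C₁ : ℝ) (hC₁ : 1 ≤ C₁)
    (hmul : ∀ s t : ℝ, 0 < s → s ≤ 1 → 0 < t → t ≤ 1 → N (s * t) ≤ C₁ * (N s * N t))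
    (n : ℕ) (a : Fin n → ℝ) (u : Fin n → ℕ → ℝ)
    (hdisj : ∀ i j, i ≠ j → ∀ m, u i m = 0 ∨ u j m = 0)
    (hnorm : ∀ i, orliczNorm N (u i) = 1) :
    orliczNorm N (fun j => ∑ k, a k * u k j) ≤
      C₁ * orliczNorm N (fun j => ∑ k, a k * (if j = (k : ℕ) then 1 else 0)) := by
  have hC₁0 : (0:ℝ) < C₁ := by linarith
  set b : ℕ → ℝ := fun j => ∑ k, a k * (if j = (k : ℕ) then 1 else 0) with hbdef
  -- the tsum of the RHS sequence is a finite sum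
  have hbval : ∀ k : Fin n, b (k : ℕ) = a k := by
    intro k
    show (∑ k' : Fin n, a k' * if (k : ℕ) = (k' : ℕ) then 1 else 0) = a k
    rw [Finset.sum_eq_single k]
    · simp
    · intro k' _ hk'
      have : (k : ℕ) ≠ (k' : ℕ) := fun h => hk'.symm (Fin.val_injective h)
      simp [this]
    · intro h; exact absurd (Finset.mem_univ k) h
  have hbzero : ∀ j : ℕ, j ∉ Finset.range n → b j = 0 := by
    intro j hj
    rw [Finset.mem_range, not_lt] at hj
    show (∑ k : Fin n, a k * if j = (k : ℕ) then 1 else 0) = 0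
    apply Finset.sum_eq_zero
    intro k _
    have : j ≠ (k : ℕ) := by
      intro h; exact absurd (h ▸ k.isLt) (not_lt.mpr hj)
    simp [this]
  have hbt : ∀ v : ℝ, (∑' j : ℕ, N (|b j| / v)) = ∑ k : Fin n, N (|a k| / v) := by
    intro v
    rw [tsum_eq_sum (s := Finset.range n)
      (by intro j hj; rw [hbzero j hj]; simp [hN0])]
    rw [← Fin.sum_univ_eq_sum_range (fun j => N (|b j| / v)) n]
    exact Finset.sum_congr rfl (fun k _ => by rw [hbval k])
  set SR : Set ℝ := {v : ℝ | 0 < v ∧ ∑' j : ℕ, N (|b j| / v) ≤ 1} with hSRdef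
  -- `SR` is nonempty
  have hSRne : SR.Nonempty := by
    have hterm : ∀ k : Fin n, Filter.Tendsto (fun v : ℝ => N (|a k| / v))
        Filter.atTop (nhds 0) := by
      intro k
      have h1 : Filter.Tendsto (fun v : ℝ => |a k| / v) Filter.atTop (nhds 0) :=
        Filter.Tendsto.div_atTop tendsto_const_nhds Filter.tendsto_id
      have := (hcont.tendsto 0).comp h1
      rwa [hN0] at this
    have hsum : Filter.Tendsto (fun v : ℝ => ∑ k : Fin n, N (|a k| / v))
        Filter.atTop (nhds 0) := by
      have := tendsto_finset_sum (Finset.univ : Finset (Fin n))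
        (fun k _ => hterm k)
      simpa using this
    have hev : ∀ᶠ v : ℝ in Filter.atTop,
        (∑ k : Fin n, N (|a k| / v)) < 1 := hsum.eventually_lt_const one_pos
    have hev2 : ∀ᶠ v : ℝ in Filter.atTop, (0:ℝ) < v := Filter.eventually_gt_atTop 0
    obtain ⟨v, hv1, hv2⟩ := (hev.and hev2).exists
    exact ⟨v, hv2, by rw [hbt]; linarith⟩
  have hSRbdd : BddBelow SR := ⟨0, fun t ht => ht.1.le⟩
  have hA0 : 0 ≤ sInf SR := le_csInf hSRne (fun t ht => ht.1.le)
  -- Key step : for every `v ∈ SR` and `w > 1`, `C₁ * v * w` is admissible for the LHS.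
  have hkey : ∀ v ∈ SR, ∀ w : ℝ, 1 < w →
      orliczNorm N (fun j => ∑ k, a k * u k j) ≤ C₁ * v * w := by
    intro v hv w hw
    obtain ⟨hv0, hvsum⟩ := hv
    rw [hbt] at hvsum
    have hw0 : (0:ℝ) < w := by linarith
    set D : ℝ := C₁ * v * w with hDdef
    have hD0 : (0:ℝ) < D := by positivity
    set f : Fin n → ℕ → ℝ := fun k m => N (|a k * u k m| / D) with hfdef
    set F : ℕ → ℝ := fun m => N (|∑ k, a k * u k m| / D) with hFdef
    -- pointwise decomposition by disjointness
    have hFnonneg : ∀ m, 0 ≤ F m := fun m =>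
      orliczAux_nonneg hN0 hmono (by positivity)
    have hfnonneg : ∀ k m, 0 ≤ f k m := fun k m =>
      orliczAux_nonneg hN0 hmono (by positivity)
    have hdecomp : ∀ m, F m = ∑ k, f k m := by
      intro m
      by_cases h : ∃ k₀, u k₀ m ≠ 0
      · obtain ⟨k₀, hk₀⟩ := h
        have hz : ∀ k, k ≠ k₀ → u k m = 0 := by
          intro k hk
          rcases hdisj k k₀ hk m with h' | h'
          · exact h'
          · exact absurd h' hk₀
        have h1 : (∑ k, a k * u k m) = a k₀ * u k₀ m := by
          refine Finset.sum_eq_single k₀ (fun k _ hk => by rw [hz k hk]; ring)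
            (fun h => absurd (Finset.mem_univ k₀) h)
        have h2 : (∑ k, f k m) = f k₀ m := by
          refine Finset.sum_eq_single k₀ (fun k _ hk => ?_)
            (fun h => absurd (Finset.mem_univ k₀) h)
          show N (|a k * u k m| / D) = 0
          simp only [hz k hk, mul_zero, abs_zero, zero_div, hN0]
        rw [h2]
        show N (|∑ k, a k * u k m| / D) = N (|a k₀ * u k₀ m| / D)
        rw [h1]
      · push_neg at h
        have h1 : (∑ k, a k * u k m) = 0 := by
          apply Finset.sum_eq_zero; intro k _; rw [h k]; ring
        have h2 : (∑ k, f k m) = 0 := by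
          apply Finset.sum_eq_zero; intro k _
          show N (|a k * u k m| / D) = 0
          simp only [h k, mul_zero, abs_zero, zero_div, hN0]
        rw [h2]
        show N (|∑ k, a k * u k m| / D) = 0
        rw [h1]; simp [hN0]
    -- show membership of `D` in the LHS set
    have hmem : D ∈ {t : ℝ | 0 < t ∧
        ∑' m : ℕ, N (|(fun j => ∑ k, a k * u k j) m| / t) ≤ 1} := by
      refine ⟨hD0, ?_⟩
      by_cases hFs : Summable F
      · -- each `f k` is summable
        have hfle : ∀ k m, f k m ≤ F m := by
          intro k m
          rw [hdecomp m]
          exact Finset.single_le_sum (fun k' _ => hfnonneg k' m) (Finset.mem_univ k)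
        have hfs : ∀ k, Summable (f k) := fun k =>
          Summable.of_nonneg_of_le (hfnonneg k) (hfle k) hFs
        have htsumF : (∑' m, F m) = ∑ k, ∑' m, f k m := by
          rw [show F = fun m => ∑ k, f k m from funext hdecomp]
          exact Summable.tsum_finsetSum (fun k _ => hfs k)
        -- each block is bounded by `N (|a k| / v)`
        have hblock : ∀ k, (∑' m, f k m) ≤ N (|a k| / v) := by
          intro k
          by_cases hak : a k = 0
          · have : f k = fun _ => 0 := by
              funext m; rw [hfdef]; simp [hak, hN0]
            rw [this, tsum_zero, hak]
            simp [hN0]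
          · set s : ℝ := |a k| / v with hsdef
            have hs0 : 0 < s := by
              have : 0 < |a k| := abs_pos.mpr hak
              positivity
            have hNs_le : N s ≤ 1 := by
              refine le_trans ?_ hvsum
              refine Finset.single_le_sum (f := fun k' => N (|a k'| / v))
                (fun k' _ => ?_) (Finset.mem_univ k)
              exact orliczAux_nonneg hN0 hmono (by positivity)
            have hs1 : s ≤ 1 := orliczAux_le_one hN0 hN1 hconv hs0.le hNs_le
            obtain ⟨hsumw, htsumw, hboundw⟩ :=
              orliczAux_norm_one hN0 hN1 hmono hconv (u k) (hnorm k) hw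
            -- pointwise bound
            have hpt : ∀ m, f k m ≤ N s * N (|u k m| / w) := by
              intro m
              have hy0 : 0 ≤ |u k m| / w := by positivity
              have hy1 : |u k m| / w ≤ 1 :=
                (div_le_one hw0).mpr (hboundw m)
              have harg : |a k * u k m| / D = (1 / C₁) * (s * (|u k m| / w)) := by
                rw [abs_mul, hDdef, hsdef, div_mul_div_comm, one_div,
                  ← div_eq_inv_mul, div_div]
                ring_nf
              show N (|a k * u k m| / D) ≤ N s * N (|u k m| / w)
              rw [harg]
              have hstep1 : N ((1 / C₁) * (s * (|u k m| / w))) ≤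
                  (1 / C₁) * N (s * (|u k m| / w)) := by
                refine orliczAux_scale hN0 hconv ?_ ?_ ?_
                · positivity
                · rw [div_le_one hC₁0]; linarith
                · positivity
              rcases eq_or_lt_of_le hy0 with hy | hy
              · simp [← hy, hN0]
              · have hstep2 : N (s * (|u k m| / w)) ≤ C₁ * (N s * N (|u k m| / w)) :=
                  hmul s (|u k m| / w) hs0 hs1 hy hy1
                calc N ((1 / C₁) * (s * (|u k m| / w)))
                    ≤ (1 / C₁) * N (s * (|u k m| / w)) := hstep1
                  _ ≤ (1 / C₁) * (C₁ * (N s * N (|u k m| / w))) := by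
                      apply mul_le_mul_of_nonneg_left hstep2 (by positivity)
                  _ = N s * N (|u k m| / w) := by field_simp
            have hgs : Summable (fun m => N s * N (|u k m| / w)) := hsumw.mul_left _
            calc (∑' m, f k m) ≤ ∑' m, N s * N (|u k m| / w) :=
                  Summable.tsum_le_tsum hpt (hfs k) hgs
              _ = N s * ∑' m, N (|u k m| / w) := tsum_mul_left
              _ ≤ N s * 1 := by
                  apply mul_le_mul_of_nonneg_left htsumw
                  exact orliczAux_nonneg hN0 hmono hs0.le
              _ = N s := mul_one _
        calc (∑' m, F m) = ∑ k, ∑' m, f k m := htsumF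
          _ ≤ ∑ k, N (|a k| / v) := Finset.sum_le_sum (fun k _ => hblock k)
          _ ≤ 1 := hvsum
      · rw [tsum_eq_zero_of_not_summable hFs]
        norm_num
    exact csInf_le ⟨0, fun t ht => ht.1.le⟩ hmem
  -- conclude
  set L : ℝ := orliczNorm N (fun j => ∑ k, a k * u k j) with hLdef
  have hkey2 : ∀ w : ℝ, 1 < w → L ≤ C₁ * w * sInf SR := by
    intro w hw
    have hw0 : (0:ℝ) < w := by linarith
    have h1 : ∀ v ∈ SR, L / (C₁ * w) ≤ v := by
      intro v hv
      rw [div_le_iff₀ (by positivity)]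
      calc L ≤ C₁ * v * w := hkey v hv w hw
        _ = v * (C₁ * w) := by ring
    have h2 : L / (C₁ * w) ≤ sInf SR := le_csInf hSRne h1
    calc L = (L / (C₁ * w)) * (C₁ * w) := by field_simp
      _ ≤ sInf SR * (C₁ * w) := by
          apply mul_le_mul_of_nonneg_right h2 (by positivity)
      _ = C₁ * w * sInf SR := by ring
  have hgoal : L ≤ C₁ * sInf SR := by
    by_contra hcon
    push_neg at hcon
    have hB0 : 0 ≤ C₁ * sInf SR := by positivity
    rcases eq_or_lt_of_le hB0 with hB | hB
    · have h2 := hkey2 2 one_lt_two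
      have h3 : C₁ * 2 * sInf SR = 2 * (C₁ * sInf SR) := by ring
      linarith [h2, hcon, hB, h3]
    · have hS0 : 0 < sInf SR := by nlinarith
      have hw1 : 1 < (L + C₁ * sInf SR) / (2 * (C₁ * sInf SR)) := by
        rw [lt_div_iff₀ (by positivity)]
        linarith
      have h2 := hkey2 _ hw1
      have heq : C₁ * ((L + C₁ * sInf SR) / (2 * (C₁ * sInf SR))) * sInf SR
          = (L + C₁ * sInf SR) / 2 := by
        field_simp
      rw [heq] at h2
      linarith
  exact hgoal
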